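/- Given ρ₁, ρ₂ ≥ 0 with ρ₁ + ρ₂ < 1 and α₁ᶜ, α₂ᶜ ≤ 0 with α₁ᶜα₂ᶜ < 1, the linear system a₁₁θ₁ + a₁₂θ₂ = a₁₃ and a₂₁θ₁ + a₂₂θ₂ = a₂₃ (with coefficients aᵢⱼ as defined in the paper) has a unique solution (θ₁*, θ₂*). -/

import Mathlib

/-! The coefficient matrix has determinant `(1 - α₁ᶜα₂ᶜ)(1 - ρ₁ - ρ₂) / (η₁η₂)`, which the sign
conditions make positive; Cramer's rule then gives the unique solution. -/

theorem existsUnique_linear_system_of_det_ne_zero {K : Type*} [Field K] {a b c d : K}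
    (hdet : a * d - b * c ≠ 0) (e f : K) :
    ∃! θ : K × K, a * θ.1 + b * θ.2 = e ∧ c * θ.1 + d * θ.2 = f := by
  refine ⟨((d * e - b * f) / (a * d - b * c), (a * f - c * e) / (a * d - b * c)), ⟨?_, ?_⟩, ?_⟩
  iterate 2
    rw [← mul_div_assoc, ← mul_div_assoc, ← add_div, div_eq_iff hdet]
    ring
  · rintro ⟨x, y⟩ ⟨h₁, h₂⟩
    have hx : x = (d * e - b * f) / (a * d - b * c) := by
      rw [eq_div_iff hdet]
      linear_combination d * h₁ - b * h₂
    have hy : y = (a * f - c * e) / (a * d - b * c) := by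
      rw [eq_div_iff hdet]
      linear_combination a * h₂ - c * h₁
    rw [hx, hy]

theorem coefficient_det_numerator {R : Type*} [CommRing R] (ρ₁ ρ₂ α₁ α₂ : R) :
    ((ρ₁ + ρ₂ - 1) - (ρ₁ - 1) * ρ₁ * α₂ - ρ₁ * ρ₂ * α₁ * α₂) *
        ((1 - ρ₁) * (ρ₂ - 1) + ρ₂ * (1 - ρ₂) * α₁ - (ρ₁ + ρ₂ - 1) * α₁ * α₂) -
      ((1 - ρ₁) * ρ₁ - (1 - ρ₁) * (1 - ρ₂) * α₁) *
        (-(ρ₁ * ρ₂ * α₂) - (ρ₂ - 1) * ρ₂ * α₁ * α₂) =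
      (1 - α₁ * α₂) * (1 - ρ₁ - ρ₂) * (((1 - ρ₁) - α₁ * ρ₂) * ((1 - ρ₂) - α₂ * ρ₁)) := by
  ring

theorem coefficient_det_eq {K : Type*} [Field K] (ρ₁ ρ₂ α₁ α₂ : K) {η₁ η₂ : K}
    (hη₁ : η₁ = (1 - ρ₁) - α₁ * ρ₂) (hη₂ : η₂ = (1 - ρ₂) - α₂ * ρ₁) (hη : η₁ * η₂ ≠ 0) :
    ((ρ₁ + ρ₂ - 1) - (ρ₁ - 1) * ρ₁ * α₂ - ρ₁ * ρ₂ * α₁ * α₂) / (η₁ * η₂) *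
        (((1 - ρ₁) * (ρ₂ - 1) + ρ₂ * (1 - ρ₂) * α₁ - (ρ₁ + ρ₂ - 1) * α₁ * α₂) / (η₁ * η₂)) -
      ((1 - ρ₁) * ρ₁ - (1 - ρ₁) * (1 - ρ₂) * α₁) / (η₁ * η₂) *
        ((-(ρ₁ * ρ₂ * α₂) - (ρ₂ - 1) * ρ₂ * α₁ * α₂) / (η₁ * η₂)) =
      (1 - α₁ * α₂) * (1 - ρ₁ - ρ₂) / (η₁ * η₂) := by
  subst hη₁ hη₂
  rw [div_mul_div_comm, div_mul_div_comm, div_sub_div_same, coefficient_det_numerator,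
    mul_div_mul_right _ _ hη]

/-- The linear system `a₁₁θ₁+a₁₂θ₂=a₁₃`, `a₂₁θ₁+a₂₂θ₂=a₂₃` has a unique solution. -/
theorem stmt_3 (ρ₁ ρ₂ α₁C α₂C a₁₃ a₂₃ : ℝ)
    (hρ₁ : 0 ≤ ρ₁) (hρ₂ : 0 ≤ ρ₂) (hρsum : ρ₁ + ρ₂ < 1)
    (hα₁ : α₁C ≤ 0) (hα₂ : α₂C ≤ 0) (hαα : α₁C * α₂C < 1) :
    let η₁ := (1 - ρ₁) - α₁C * ρ₂
    let η₂ := (1 - ρ₂) - α₂C * ρ₁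
    let a₁₁ := ((ρ₁ + ρ₂ - 1) - (ρ₁ - 1) * ρ₁ * α₂C - ρ₁ * ρ₂ * α₁C * α₂C) / (η₁ * η₂)
    let a₁₂ := ((1 - ρ₁) * ρ₁ - (1 - ρ₁) * (1 - ρ₂) * α₁C) / (η₁ * η₂)
    let a₂₁ := (-(ρ₁ * ρ₂ * α₂C) - (ρ₂ - 1) * ρ₂ * α₁C * α₂C) / (η₁ * η₂)
    let a₂₂ := ((1 - ρ₁) * (ρ₂ - 1) + ρ₂ * (1 - ρ₂) * α₁C - (ρ₁ + ρ₂ - 1) * α₁C * α₂C) / (η₁ * η₂)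
    ∃! θ : ℝ × ℝ, a₁₁ * θ.1 + a₁₂ * θ.2 = a₁₃ ∧ a₂₁ * θ.1 + a₂₂ * θ.2 = a₂₃ := by
  intro η₁ η₂ a₁₁ a₁₂ a₂₁ a₂₂
  have hη₁ : 0 < η₁ := by linarith [mul_nonpos_of_nonpos_of_nonneg hα₁ hρ₂]
  have hη₂ : 0 < η₂ := by linarith [mul_nonpos_of_nonpos_of_nonneg hα₂ hρ₁]
  have hdet : a₁₁ * a₂₂ - a₁₂ * a₂₁ = (1 - α₁C * α₂C) * (1 - ρ₁ - ρ₂) / (η₁ * η₂) :=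
    coefficient_det_eq ρ₁ ρ₂ α₁C α₂C rfl rfl (mul_pos hη₁ hη₂).ne'
  refine existsUnique_linear_system_of_det_ne_zero ?_ a₁₃ a₂₃
  rw [hdet]
  have hρ : 0 < 1 - ρ₁ - ρ₂ := by linarith
  exact (div_pos (mul_pos (sub_pos.2 hαα) hρ) (mul_pos hη₁ hη₂)).ne'
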